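/- Let $P$ and $Q$ be orthogonal projections on a Hilbert space with $\|P - Q\| = \delta$, and let $A$ be a nonnegative self-adjoint operator with $A \ge \gamma(\mathbf{1} - P)$ for some $\gamma > 0$. Then $(\mathbf{1}-Q) A (\mathbf{1}-Q) \ge \gamma(1 - 2\delta - \delta^2)(\mathbf{1} - Q)$ as quadratic forms. -/

import Mathlib

/-!
For `w = (1 - Q) v` we have `Q w = 0`, so `P w = (P - Q) w` and hence
`⟪(1 - P) w, w⟫ ≥ (1 - ‖P - Q‖) ‖w‖²`. The gap `A ≥ γ (1 - P)` then gives
`⟪A w, w⟫ ≥ γ (1 - δ) ‖w‖² ≥ γ (1 - 2δ - δ²) ‖w‖²`, and `‖w‖² = ⟪(1 - Q) v, v⟫`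
because `1 - Q` is an orthogonal projection.
-/

open scoped InnerProductSpace

namespace ContinuousLinearMap

variable {𝕜 E : Type*} [RCLike 𝕜] [NormedAddCommGroup E] [InnerProductSpace 𝕜 E]

theorem re_inner_apply_self_eq_norm_sq_of_isStarProjection [CompleteSpace E]
    {T : E →L[𝕜] E} (hT : IsStarProjection T) (v : E) :
    RCLike.re ⟪T v, v⟫_𝕜 = ‖T v‖ ^ 2 := by
  have hTT : T (T v) = T v := congrArg (· v) hT.isIdempotentElem.eq
  have hsymm : ⟪T v, v⟫_𝕜 = ⟪T v, T v⟫_𝕜 := by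
    simpa only [coe_coe, hTT] using hT.isSelfAdjoint.isSymmetric (T v) v
  rw [hsymm, inner_self_eq_norm_sq]

theorem one_sub_norm_sub_mul_norm_sq_le_re_inner_one_sub_apply_self
    {P Q : E →L[𝕜] E} {w : E} (hw : Q w = 0) :
    (1 - ‖P - Q‖) * ‖w‖ ^ 2 ≤ RCLike.re ⟪(1 - P) w, w⟫_𝕜 := by
  have hPw : (1 - P) w = w - (P - Q) w := by simp [hw]
  have hbound : RCLike.re ⟪(P - Q) w, w⟫_𝕜 ≤ ‖P - Q‖ * ‖w‖ ^ 2 :=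
    calc RCLike.re ⟪(P - Q) w, w⟫_𝕜 ≤ ‖(P - Q) w‖ * ‖w‖ := re_inner_le_norm _ _
      _ ≤ ‖P - Q‖ * ‖w‖ * ‖w‖ := by gcongr; exact (P - Q).le_opNorm w
      _ = ‖P - Q‖ * ‖w‖ ^ 2 := by ring
  rw [hPw, inner_sub_left, map_sub, inner_self_eq_norm_sq]
  linarith

end ContinuousLinearMap

theorem stmt_11_general {E : Type*} [NormedAddCommGroup E] [InnerProductSpace ℂ E] [CompleteSpace E]
    (P Q A : E →L[ℂ] E)
    (hQ : IsSelfAdjoint Q) (hQidem : Q ∘L Q = Q)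
    (δ : ℝ) (hδ : ‖P - Q‖ = δ)
    (γ : ℝ) (hγ : 0 < γ)
    (hgap : ∀ v : E, γ * (inner ℂ ((1 - P) v) v : ℂ).re ≤ (inner ℂ (A v) v : ℂ).re) :
    ∀ v : E, γ * (1 - 2 * δ - δ ^ 2) * (inner ℂ ((1 - Q) v) v : ℂ).re ≤
      (inner ℂ (A ((1 - Q) v)) ((1 - Q) v) : ℂ).re := by
  intro v
  have hQproj : IsStarProjection Q := ⟨hQidem, hQ⟩
  set w := (1 - Q) v
  have hQw : Q w = 0 := congrArg (· v) hQproj.mul_one_sub_self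
  have hδ0 : 0 ≤ δ := hδ ▸ norm_nonneg _
  have hw : (inner ℂ ((1 - Q) v) v : ℂ).re = ‖w‖ ^ 2 :=
    ContinuousLinearMap.re_inner_apply_self_eq_norm_sq_of_isStarProjection hQproj.one_sub v
  have hPw : (1 - δ) * ‖w‖ ^ 2 ≤ (inner ℂ ((1 - P) w) w : ℂ).re :=
    hδ ▸ ContinuousLinearMap.one_sub_norm_sub_mul_norm_sq_le_re_inner_one_sub_apply_self hQw
  rw [hw]
  nlinarith [hgap w, mul_le_mul_of_nonneg_left hPw hγ.le,
    mul_nonneg hγ.le (mul_nonneg (add_nonneg hδ0 (sq_nonneg δ)) (sq_nonneg ‖w‖))]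

/-- A spectral gap above the range of a projection `P` transfers, with controlled loss,
to a nearby projection `Q`: if `‖P - Q‖ = δ` and `A ≥ γ(1-P)` then
`(1-Q)A(1-Q) ≥ γ(1 - 2δ - δ²)(1-Q)` as quadratic forms. -/
theorem stmt_11 {E : Type*} [NormedAddCommGroup E] [InnerProductSpace ℂ E] [CompleteSpace E]
    (P Q A : E →L[ℂ] E)
    (hP : IsSelfAdjoint P) (hPidem : P ∘L P = P)
    (hQ : IsSelfAdjoint Q) (hQidem : Q ∘L Q = Q)
    (δ : ℝ) (hδ : ‖P - Q‖ = δ)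
    (hA : IsSelfAdjoint A) (hApos : ∀ v : E, 0 ≤ (inner ℂ (A v) v : ℂ).re)
    (γ : ℝ) (hγ : 0 < γ)
    (hgap : ∀ v : E, γ * (inner ℂ ((1 - P) v) v : ℂ).re ≤ (inner ℂ (A v) v : ℂ).re) :
    ∀ v : E, γ * (1 - 2 * δ - δ ^ 2) * (inner ℂ ((1 - Q) v) v : ℂ).re ≤
      (inner ℂ (A ((1 - Q) v)) ((1 - Q) v) : ℂ).re :=
  stmt_11_general P Q A hQ hQidem δ hδ γ hγ hgap
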